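/- Let B(s*) = H + (β/2)‖s*‖I + σ‖s*‖²I. If s* satisfies B(s*)s* = -g, B(s*) ≻ 0 (positive definite), and β ≥ -3σ‖s*‖ with σ ≥ 0, then s* is the unique minimizer: M(s) > M(s*) for all s ≠ s*. -/

import Mathlib

/-
With `B = Bmat H β σ s*` and `c = (β/2)‖s*‖ + σ‖s*‖²` we have `H = B - c I` and `g = -B s*`, so
`M(s) - M(s*)` splits into the quadratic form `(1/2) wᵀ B w` of `w = s - s*` plus a term depending
only on `r = ‖s‖` and `ρ = ‖s*‖`. That radial term factors as
`((β + 3σρ)/12)(r - ρ)²(2r + ρ) + (σ/4) r²(r - ρ)²`, which is nonnegative when `σ ≥ 0` and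
`β ≥ -3σρ`, while the quadratic form is positive for `w ≠ 0`.
-/

open Matrix Polynomial

noncomputable def vecEnorm {n : ℕ} (s : Fin n → ℝ) : ℝ := Real.sqrt (s ⬝ᵥ s)

noncomputable def Mfun {n : ℕ} (f0 : ℝ) (g : Fin n → ℝ)
    (H : Matrix (Fin n) (Fin n) ℝ) (β σ : ℝ) (s : Fin n → ℝ) : ℝ :=
  f0 + g ⬝ᵥ s + (1/2) * (s ⬝ᵥ (H *ᵥ s)) + (β/6) * vecEnorm s ^ 3 + (σ/4) * vecEnorm s ^ 4

noncomputable def Bmat {n : ℕ} (H : Matrix (Fin n) (Fin n) ℝ) (β σ : ℝ)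
    (s : Fin n → ℝ) : Matrix (Fin n) (Fin n) ℝ :=
  H + ((β/2) * vecEnorm s) • (1 : Matrix (Fin n) (Fin n) ℝ)
    + (σ * vecEnorm s ^ 2) • (1 : Matrix (Fin n) (Fin n) ℝ)

theorem Matrix.IsSymm.dotProduct_mulVec_comm {R m : Type*} [CommSemiring R] [Fintype m]
    {A : Matrix m m R} (hA : A.IsSymm) (v w : m → R) : v ⬝ᵥ A *ᵥ w = w ⬝ᵥ A *ᵥ v := by
  rw [dotProduct_mulVec, ← mulVec_transpose, hA.eq, dotProduct_comm]

theorem Matrix.IsSymm.sub_dotProduct_mulVec_sub {R m : Type*} [CommRing R] [Fintype m]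
    {A : Matrix m m R} (hA : A.IsSymm) (v w : m → R) :
    (v - w) ⬝ᵥ A *ᵥ (v - w) = v ⬝ᵥ A *ᵥ v - 2 * (w ⬝ᵥ A *ᵥ v) + w ⬝ᵥ A *ᵥ w := by
  rw [mulVec_sub, sub_dotProduct, dotProduct_sub, dotProduct_sub, hA.dotProduct_mulVec_comm v w]
  ring

section

variable {n : ℕ}

theorem vecEnorm_nonneg (v : Fin n → ℝ) : 0 ≤ vecEnorm v :=
  Real.sqrt_nonneg _

theorem vecEnorm_sq (v : Fin n → ℝ) : vecEnorm v ^ 2 = v ⬝ᵥ v :=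
  Real.sq_sqrt (Finset.sum_nonneg fun i _ => mul_self_nonneg (v i))

theorem Bmat_mulVec (H : Matrix (Fin n) (Fin n) ℝ) (β σ : ℝ) (t v : Fin n → ℝ) :
    Bmat H β σ t *ᵥ v = H *ᵥ v + (β / 2 * vecEnorm t + σ * vecEnorm t ^ 2) • v := by
  rw [Bmat, add_mulVec, add_mulVec, smul_mulVec, smul_mulVec, one_mulVec, add_smul, add_assoc]

end

/-- The paper's `F₂`, as a function of `r = ‖s‖` and `ρ = ‖s*‖`. -/
noncomputable def radialGap (β σ r ρ : ℝ) : ℝ :=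
  β / 6 * (r ^ 3 - ρ ^ 3) + σ / 4 * (r ^ 4 - ρ ^ 4) - (β / 2 * ρ + σ * ρ ^ 2) * (r ^ 2 - ρ ^ 2) / 2

theorem radialGap_nonneg {β σ r ρ : ℝ} (hr : 0 ≤ r) (hρ : 0 ≤ ρ) (hσ : 0 ≤ σ)
    (hβ : -3 * σ * ρ ≤ β) : 0 ≤ radialGap β σ r ρ := by
  have hβσ : 0 ≤ (β + 3 * σ * ρ) / 12 * (r - ρ) ^ 2 * (2 * r + ρ) := by
    have : 0 ≤ β + 3 * σ * ρ := by linarith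
    positivity
  have hσr : 0 ≤ σ / 4 * r ^ 2 * (r - ρ) ^ 2 := by positivity
  have : radialGap β σ r ρ = (β + 3 * σ * ρ) / 12 * (r - ρ) ^ 2 * (2 * r + ρ)
      + σ / 4 * r ^ 2 * (r - ρ) ^ 2 := by
    rw [radialGap]
    ring
  linarith

theorem Mfun_sub_Mfun {n : ℕ} (f0 : ℝ) {g : Fin n → ℝ} {H : Matrix (Fin n) (Fin n) ℝ} {β σ : ℝ}
    {t : Fin n → ℝ} (hB : (Bmat H β σ t).IsSymm) (ht : Bmat H β σ t *ᵥ t = -g)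
    (s : Fin n → ℝ) :
    Mfun f0 g H β σ s - Mfun f0 g H β σ t =
      1 / 2 * ((s - t) ⬝ᵥ Bmat H β σ t *ᵥ (s - t)) + radialGap β σ (vecEnorm s) (vecEnorm t) := by
  have hH : ∀ v, v ⬝ᵥ H *ᵥ v = v ⬝ᵥ Bmat H β σ t *ᵥ v
      - (β / 2 * vecEnorm t + σ * vecEnorm t ^ 2) * vecEnorm v ^ 2 := by
    intro v
    rw [Bmat_mulVec, dotProduct_add, dotProduct_smul, smul_eq_mul, ← vecEnorm_sq]
    ring
  have hg : ∀ v, g ⬝ᵥ v = -(t ⬝ᵥ Bmat H β σ t *ᵥ v) := by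
    intro v
    rw [← neg_neg g, ← ht, neg_dotProduct, dotProduct_comm, hB.dotProduct_mulVec_comm]
  rw [hB.sub_dotProduct_mulVec_sub, Mfun, Mfun, hH s, hH t, hg s, hg t, radialGap]
  ring

theorem stmt19_general {n : ℕ} (f0 : ℝ) (g : Fin n → ℝ) (H : Matrix (Fin n) (Fin n) ℝ)
    (β σ : ℝ) (hσ : 0 ≤ σ) (sstar : Fin n → ℝ)
    (h1 : (Bmat H β σ sstar) *ᵥ sstar = -g)
    (h2 : (Bmat H β σ sstar).PosDef)
    (h3 : β ≥ -3 * σ * vecEnorm sstar) :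
    ∀ s : Fin n → ℝ, s ≠ sstar → Mfun f0 g H β σ sstar < Mfun f0 g H β σ s := by
  intro s hs
  have hB : (Bmat H β σ sstar).IsSymm := isHermitian_iff_isSymm.mp h2.isHermitian
  have hquad : 0 < (s - sstar) ⬝ᵥ Bmat H β σ sstar *ᵥ (s - sstar) := by
    simpa only [star_trivial] using h2.dotProduct_mulVec_pos (sub_ne_zero.mpr hs)
  have hrad := radialGap_nonneg (vecEnorm_nonneg s) (vecEnorm_nonneg sstar) hσ h3
  linarith [Mfun_sub_Mfun f0 hB h1 s]

theorem stmt19 {n : ℕ} (f0 : ℝ) (g : Fin n → ℝ) (H : Matrix (Fin n) (Fin n) ℝ)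
    (hH : H.IsSymm) (β σ : ℝ) (hσ : 0 ≤ σ) (sstar : Fin n → ℝ)
    (h1 : (Bmat H β σ sstar) *ᵥ sstar = -g)
    (h2 : (Bmat H β σ sstar).PosDef)
    (h3 : β ≥ -3 * σ * vecEnorm sstar) :
    ∀ s : Fin n → ℝ, s ≠ sstar → Mfun f0 g H β σ sstar < Mfun f0 g H β σ s :=
  stmt19_general f0 g H β σ hσ sstar h1 h2 h3
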